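/- Let p ≥ 5, k an algebraically closed field of characteristic p, χ a smooth k-character of K₀(p) trivial on Z₁, and E a nonsplit extension of χ𝔞 by χ as smooth K₀(p)-representations. Then E admits a k-basis (e₀, e₁) such that K₀(p) acts on e_i through χ𝔞^i and (1+pa b; pc 1+pd)·e₁ = e₁ + c̄·e₀ for all a,b,c,d ∈ Z_p, where c̄ is c mod p. -/

import Mathlib

/-!
Write `ρ g = (χ g, f g; 0, ψ g)`: then `f` is a `(χ, ψ)`-cocycle, and the extension splits iff
`f = u • (ψ - χ)` for some `u`.

Smoothness forces `χ`, hence `ψ = χ𝔞`, to be trivial on the pro-`p` Iwahori subgroup `I₁`: the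
`pⁿ`-th powers of its unipotent and diagonal factors lie in the level-`pⁿ` congruence subgroup,
and `x ↦ x ^ pⁿ` is injective in characteristic `p`. On `I₁` the cocycle is then additive, so it
kills `p`-th powers. Conjugation by `t = diag(2, 1)`, where `𝔞 t = 2`, kills `f` on the upper
unipotents (as `4 ≠ 1` for `p ≥ 5`) and on the diagonal part of `I₁`; by the Iwahori
factorisation `g = lower · diag · upper`, `f g = c̄ · f (lower 1)` on `I₁`. If `f (lower 1)` were
`0`, then `f` would vanish on `I₁`, which contains every commutator `[t, g]`; so
`f (t g) = f (g t)`, which rearranges to `f = u • (ψ - χ)` with `u = f t / (ψ t - χ t)`,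
contradicting non-splitness. The basis is `e₀ = (f (lower 1), 0)`, `e₁ = (0, 1)`.
-/

/-- The subgroup `K₀(p)` of `GL₂(ℤ_p)`: matrices whose lower-left entry lies in `pℤ_p`. -/
def K0 (p : ℕ) [Fact p.Prime] : Subgroup (GL (Fin 2) ℤ_[p]) where
  carrier := {g | ∃ c : ℤ_[p], (g : Matrix (Fin 2) (Fin 2) ℤ_[p]) 1 0 = (p : ℤ_[p]) * c}
  one_mem' := ⟨0, by simp [Matrix.one_apply]⟩
  mul_mem' := by
    rintro a b ⟨c, hc⟩ ⟨d, hd⟩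
    refine ⟨c * (b : Matrix (Fin 2) (Fin 2) ℤ_[p]) 0 0 +
      (a : Matrix (Fin 2) (Fin 2) ℤ_[p]) 1 1 * d, ?_⟩
    simp only [Units.val_mul, Matrix.mul_apply, Fin.sum_univ_two, hc, hd]
    ring
  inv_mem' := by
    rintro a ⟨c, hc⟩
    refine ⟨-(Ring.inverse (a : Matrix (Fin 2) (Fin 2) ℤ_[p]).det * c), ?_⟩
    rw [Matrix.GeneralLinearGroup.coe_inv, Matrix.inv_def, Matrix.adjugate_fin_two]
    simp [hc]
    ring

/-- `g` belongs to `Z₁ = 1 + pℤ_p`, viewed as scalar matrices. -/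
def IsZ1 (p : ℕ) [Fact p.Prime] (g : GL (Fin 2) ℤ_[p]) : Prop :=
  ∃ z : ℤ_[p], (g : Matrix (Fin 2) (Fin 2) ℤ_[p]) =
    (1 + (p : ℤ_[p]) * z) • (1 : Matrix (Fin 2) (Fin 2) ℤ_[p])

/-- A character of `K₀(p)` is smooth if it is trivial on some principal congruence
subgroup. -/
def IsSmoothChar (p : ℕ) [Fact p.Prime] (k : Type) [Field k] (χ : K0 p →* kˣ) : Prop :=
  ∃ n : ℕ, 0 < n ∧ ∀ g : K0 p,
    (∀ i j, ((g : GL (Fin 2) ℤ_[p]) : Matrix (Fin 2) (Fin 2) ℤ_[p]) i j -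
        (1 : Matrix (Fin 2) (Fin 2) ℤ_[p]) i j ∈ Ideal.span {(p : ℤ_[p]) ^ n}) → χ g = 1

/-- `ρ` is an extension of the character `ψ` by the character `χ`, realized on `k × k` with
sub-line `k × {0}`. -/
def IsExt (p : ℕ) [Fact p.Prime] (k : Type) [Field k] (χ ψ : K0 p →* kˣ)
    (ρ : Representation k (K0 p) (k × k)) : Prop :=
  (∀ (g : K0 p) (x : k), ρ g (x, 0) = ((χ g : k) * x, 0)) ∧
  (∀ (g : K0 p) (v : k × k), (ρ g v).2 = (ψ g : k) * v.2)

/-- `ρ` is a smooth representation: some principal congruence subgroup acts trivially. -/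
def IsSmoothRep (p : ℕ) [Fact p.Prime] (k : Type) [Field k]
    (ρ : Representation k (K0 p) (k × k)) : Prop :=
  ∃ n : ℕ, 0 < n ∧ ∀ g : K0 p,
    (∀ i j, ((g : GL (Fin 2) ℤ_[p]) : Matrix (Fin 2) (Fin 2) ℤ_[p]) i j -
        (1 : Matrix (Fin 2) (Fin 2) ℤ_[p]) i j ∈ Ideal.span {(p : ℤ_[p]) ^ n}) →
      ρ g = LinearMap.id

/-- `ρ` is trivial on the pro-`p` center `Z₁`. -/
def IsZ1TrivialRep (p : ℕ) [Fact p.Prime] (k : Type) [Field k]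
    (ρ : Representation k (K0 p) (k × k)) : Prop :=
  ∀ g : K0 p, IsZ1 p (g : GL (Fin 2) ℤ_[p]) → ρ g = LinearMap.id

/-- The extension `ρ` of `ψ` by `χ` does not split: there is no stable complementary line. -/
def IsNonsplit (p : ℕ) [Fact p.Prime] (k : Type) [Field k] (ψ : K0 p →* kˣ)
    (ρ : Representation k (K0 p) (k × k)) : Prop :=
  ¬ ∃ v : k × k, v.2 ≠ 0 ∧ ∀ g : K0 p, ρ g v = (ψ g : k) • v

/-- The value at `g ∈ K₀(p)` of the character `𝔞 : (a b; pc d) ↦ a·d⁻¹ mod p`. -/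
noncomputable def aVal (p : ℕ) [Fact p.Prime] (k : Type) [Field k] [CharP k p]
    (g : K0 p) : k :=
  ZMod.castHom (dvd_refl p) k
    (PadicInt.toZMod (((g : GL (Fin 2) ℤ_[p]) : Matrix (Fin 2) (Fin 2) ℤ_[p]) 0 0) *
      (PadicInt.toZMod (((g : GL (Fin 2) ℤ_[p]) : Matrix (Fin 2) (Fin 2) ℤ_[p]) 1 1))⁻¹)

section Cocycle

variable {G k : Type*} [Group G] [Field k]

def IsCocycle (χ ψ : G →* kˣ) (f : G → k) : Prop :=
  ∀ g h, f (g * h) = χ g * f h + f g * ψ h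

namespace IsCocycle

variable {χ ψ : G →* kˣ} {f : G → k}

theorem map_mul_of_trivial (hf : IsCocycle χ ψ f) {g h : G} (hg : χ g = 1) (hh : ψ h = 1) :
    f (g * h) = f g + f h := by
  rw [hf, hg, hh, Units.val_one, one_mul, mul_one, add_comm]

theorem map_mul_of_left (hf : IsCocycle χ ψ f) {n : G} (hn : χ n = 1) (hfn : f n = 0) (g : G) :
    f (n * g) = f g := by
  rw [hf, hn, hfn, Units.val_one, one_mul, zero_mul, add_zero]

theorem mul_sub_eq (hf : IsCocycle χ ψ f) {t g : G} (h : f (t * g) = f (g * t)) :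
    f g * (ψ t - χ t) = f t * (ψ g - χ g) := by
  rw [hf, hf] at h
  linear_combination -h

theorem conj_mul (hf : IsCocycle χ ψ f) {g : G} (hg : χ g = 1) (hψg : ψ g = 1) (t : G) :
    f (t * g * t⁻¹) * ψ t = χ t * f g := by
  have hconj : χ (t * g * t⁻¹) = 1 := by simp [hg]
  have h := hf (t * g * t⁻¹) t
  rw [inv_mul_cancel_right, hf, hconj, hψg] at h
  linear_combination -h

theorem exists_eq_mul_sub (hf : IsCocycle χ ψ f) {N : Subgroup G} (hχ : ∀ n ∈ N, χ n = 1)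
    (h0 : ∀ n ∈ N, f n = 0) {t : G} (hN : ∀ g, t * g * t⁻¹ * g⁻¹ ∈ N)
    (ht : (ψ t : k) - χ t ≠ 0) : ∃ u : k, ∀ g, f g = u * ((ψ g : k) - χ g) := by
  refine ⟨f t / ((ψ t : k) - χ t), fun g => ?_⟩
  have hcomm : f (t * g) = f (g * t) := by
    rw [← hf.map_mul_of_left (hχ _ (hN g)) (h0 _ (hN g)) (g * t),
      show t * g * t⁻¹ * g⁻¹ * (g * t) = t * g by group]
  rw [div_mul_eq_mul_div, eq_div_iff ht, hf.mul_sub_eq hcomm]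

end IsCocycle

end Cocycle

def Representation.upperRight {k G : Type*} [Field k] [Monoid G]
    (ρ : Representation k G (k × k)) (g : G) : k :=
  (ρ g (0, 1)).1

namespace IsExt

variable {p : ℕ} [Fact p.Prime] {k : Type} [Field k] {χ ψ : K0 p →* kˣ}
  {ρ : Representation k (K0 p) (k × k)}

theorem apply_zero_one (hext : IsExt p k χ ψ ρ) (g : K0 p) :
    ρ g (0, 1) = (ρ.upperRight g, (ψ g : k)) :=
  Prod.ext rfl (by simpa using hext.2 g (0, 1))

theorem apply_eq (hext : IsExt p k χ ψ ρ) (g : K0 p) (x y : k) :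
    ρ g (x, y) = ((χ g : k) * x + ρ.upperRight g * y, (ψ g : k) * y) := by
  have hxy : ((x, y) : k × k) = x • ((1 : k), (0 : k)) + y • ((0 : k), (1 : k)) := by simp
  rw [hxy, map_add, map_smul, map_smul, hext.1, hext.apply_zero_one]
  simp only [Prod.smul_mk, smul_eq_mul, Prod.mk_add_mk]
  ring_nf

theorem isCocycle (hext : IsExt p k χ ψ ρ) : IsCocycle χ ψ ρ.upperRight := by
  intro g h
  have h_mul : ρ (g * h) (0, 1) = ρ g (ρ h (0, 1)) := by rw [map_mul]; rfl
  rw [hext.apply_zero_one, hext.apply_zero_one, hext.apply_eq] at h_mul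
  exact congrArg Prod.fst h_mul

theorem not_coboundary (hext : IsExt p k χ ψ ρ) (hns : IsNonsplit p k ψ ρ) (u : k) :
    ¬ ∀ g, ρ.upperRight g = u * ((ψ g : k) - χ g) := by
  refine fun hu => hns ⟨(u, 1), one_ne_zero, fun g => ?_⟩
  rw [hext.apply_eq, hu]
  ext <;> simp only [Prod.smul_fst, Prod.smul_snd, smul_eq_mul]
  ring

end IsExt

namespace PadicInt

variable {p : ℕ} [Fact p.Prime]

theorem toZMod_eq_zero_iff {x : ℤ_[p]} : toZMod x = 0 ↔ (p : ℤ_[p]) ∣ x := by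
  rw [← RingHom.mem_ker, ker_toZMod, maximalIdeal_eq_span_p, Ideal.mem_span_singleton]

theorem toZMod_eq_one_iff {x : ℤ_[p]} : toZMod x = 1 ↔ ∃ a, x = 1 + p * a := by
  rw [← sub_eq_zero, ← map_one toZMod, ← map_sub, toZMod_eq_zero_iff]
  exact ⟨fun ⟨a, h⟩ => ⟨a, by linear_combination h⟩, fun ⟨a, h⟩ => ⟨a, by linear_combination h⟩⟩

theorem isUnit_iff_toZMod_ne_zero {x : ℤ_[p]} : IsUnit x ↔ toZMod x ≠ 0 := by
  rw [← IsLocalRing.notMem_maximalIdeal, ← ker_toZMod, RingHom.mem_ker]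

theorem toZMod_units_inv (u : ℤ_[p]ˣ) :
    toZMod ((u⁻¹ : ℤ_[p]ˣ) : ℤ_[p]) = (toZMod (u : ℤ_[p]))⁻¹ :=
  eq_inv_of_mul_eq_one_left (by rw [← map_mul, Units.inv_mul, map_one])

theorem pow_succ_dvd_pow_sub_one {x : ℤ_[p]} (hx : toZMod x = 1) (n : ℕ) :
    (p : ℤ_[p]) ^ (n + 1) ∣ x ^ p ^ n - 1 := by
  obtain ⟨a, rfl⟩ := toZMod_eq_one_iff.mp hx
  simpa using dvd_sub_pow_of_dvd_sub (b := 1) ⟨a, by ring⟩ n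

theorem addMonoidHom_apply_eq_toZMod_mul {k : Type*} [Ring k] [CharP k p] (φ : ℤ_[p] →+ k)
    (x : ℤ_[p]) :
    φ x = ZMod.castHom (dvd_refl p) k (toZMod x) * φ 1 := by
  set n := (toZMod x).val
  obtain ⟨y, hy⟩ : (p : ℤ_[p]) ∣ x - n := by
    rw [← toZMod_eq_zero_iff, map_sub, map_natCast, ZMod.natCast_zmod_val, sub_self]
  have hx : x = n • (1 : ℤ_[p]) + p • y := by rw [nsmul_one, nsmul_eq_mul, ← hy]; ring
  rw [← ZMod.natCast_zmod_val (toZMod x), map_natCast]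
  conv_lhs => rw [hx, map_add, map_nsmul, map_nsmul, nsmul_eq_mul, nsmul_eq_mul,
    CharP.cast_eq_zero k p, zero_mul, add_zero]

end PadicInt

namespace K0

open PadicInt Matrix.GeneralLinearGroup

variable {p : ℕ} [Fact p.Prime]

def mat (g : K0 p) : Matrix (Fin 2) (Fin 2) ℤ_[p] :=
  ((g : GL (Fin 2) ℤ_[p]) : Matrix (Fin 2) (Fin 2) ℤ_[p])

@[simp] theorem mat_one : mat (1 : K0 p) = 1 := rfl

@[simp] theorem mat_mul (g h : K0 p) : mat (g * h) = mat g * mat h := rfl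

theorem mat_injective : Function.Injective (mat (p := p)) :=
  fun _ _ h => Subtype.ext (Units.ext h)

theorem toZMod_mat_one_zero (g : K0 p) : toZMod (mat g 1 0) = 0 := by
  obtain ⟨c, hc⟩ := g.2
  rw [mat, hc, toZMod_eq_zero_iff]
  exact dvd_mul_right _ _

/-- Multiplicative because `K₀(p)` is upper triangular mod `p`. -/
noncomputable def diagRed : K0 p →* ZMod p × ZMod p where
  toFun g := (toZMod (mat g 0 0), toZMod (mat g 1 1))
  map_one' := by simp
  map_mul' g h := by
    simp [Matrix.mul_apply, Fin.sum_univ_two, toZMod_mat_one_zero]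

variable (p) in
/-- The pro-`p` Iwahori subgroup `I₁`. -/
noncomputable def I1 : Subgroup (K0 p) := diagRed.ker

theorem mem_I1_iff {g : K0 p} :
    g ∈ I1 p ↔ toZMod (mat g 0 0) = 1 ∧ toZMod (mat g 1 1) = 1 := by
  simp [I1, diagRed, Prod.ext_iff]

theorem commutator_mem_I1 (t g : K0 p) : t * g * t⁻¹ * g⁻¹ ∈ I1 p := by
  have h_inv (x : K0 p) : diagRed x * diagRed x⁻¹ = 1 := by
    rw [← map_mul, mul_inv_cancel, map_one]
  rw [I1, MonoidHom.mem_ker, map_mul, map_mul, map_mul]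
  calc _ = (diagRed t * diagRed t⁻¹) * (diagRed g * diagRed g⁻¹) := by ring
    _ = 1 := by rw [h_inv, h_inv, one_mul]

theorem mem_I1_of_mat_eq {g : K0 p} {a b c d : ℤ_[p]}
    (h : mat g = !![1 + p * a, b; p * c, 1 + p * d]) : g ∈ I1 p := by
  simp [mem_I1_iff, h]

theorem exists_mat_eq_of_mem_I1 {g : K0 p} (hg : g ∈ I1 p) :
    ∃ a b c d : ℤ_[p], mat g = !![1 + p * a, b; p * c, 1 + p * d] := by
  obtain ⟨a, ha⟩ := toZMod_eq_one_iff.mp (mem_I1_iff.mp hg).1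
  obtain ⟨d, hd⟩ := toZMod_eq_one_iff.mp (mem_I1_iff.mp hg).2
  obtain ⟨c, hc⟩ := g.2
  refine ⟨a, mat g 0 1, c, d, ?_⟩
  rw [← ha, ← hd, mat, ← hc]
  exact Matrix.eta_fin_two _

noncomputable def upper : AddChar ℤ_[p] (K0 p) where
  toFun y := ⟨upperRightHom y, 0, by simp⟩
  map_zero_eq_one' := Subtype.ext (AddChar.map_zero_eq_one _)
  map_add_eq_mul' a b := Subtype.ext (AddChar.map_add_eq_mul _ a b)

noncomputable def lower : AddChar ℤ_[p] (K0 p) where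
  toFun x := ⟨⟨!![1, 0; p * x, 1], !![1, 0; -(p * x), 1], by simp [Matrix.one_fin_two],
    by simp [Matrix.one_fin_two]⟩, x, rfl⟩
  map_zero_eq_one' := by ext i j; fin_cases i <;> fin_cases j <;> simp
  map_add_eq_mul' a b := by
    ext i j; fin_cases i <;> fin_cases j <;> simp [Matrix.mul_apply]; ring

noncomputable def diag : ℤ_[p]ˣ × ℤ_[p]ˣ →* K0 p where
  toFun u := ⟨⟨!![(u.1 : ℤ_[p]), 0; 0, u.2], !![(u.1⁻¹ : ℤ_[p]ˣ), 0; 0, (u.2⁻¹ : ℤ_[p]ˣ)],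
    by simp [Matrix.one_fin_two], by simp [Matrix.one_fin_two]⟩, 0, by simp⟩
  map_one' := by ext i j; fin_cases i <;> fin_cases j <;> rfl
  map_mul' u v := by ext i j; fin_cases i <;> fin_cases j <;> simp [Matrix.mul_apply]

@[simp] theorem mat_upper (y : ℤ_[p]) : mat (upper y) = !![1, y; 0, 1] := rfl

@[simp] theorem mat_lower (x : ℤ_[p]) : mat (lower x) = !![1, 0; p * x, 1] := rfl

@[simp] theorem mat_diag (u : ℤ_[p]ˣ × ℤ_[p]ˣ) : mat (diag u) = !![(u.1 : ℤ_[p]), 0; 0, u.2] :=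
  rfl

theorem upper_mem_I1 (y : ℤ_[p]) : upper y ∈ I1 p := by simp [mem_I1_iff]

theorem lower_mem_I1 (x : ℤ_[p]) : lower x ∈ I1 p := by simp [mem_I1_iff]

theorem diag_mem_I1 {u : ℤ_[p]ˣ × ℤ_[p]ˣ} (h₁ : toZMod (u.1 : ℤ_[p]) = 1)
    (h₂ : toZMod (u.2 : ℤ_[p]) = 1) : diag u ∈ I1 p := by
  simp [mem_I1_iff, h₁, h₂]

theorem diag_conj_upper (u : ℤ_[p]ˣ × ℤ_[p]ˣ) (y : ℤ_[p]) :
    diag u * upper y * (diag u)⁻¹ = upper ((u.1 : ℤ_[p]) * y * ((u.2⁻¹ : ℤ_[p]ˣ) : ℤ_[p])) := by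
  apply mat_injective
  rw [← map_inv diag u, mat_mul, mat_mul, mat_diag, mat_diag, mat_upper, mat_upper]
  simp

theorem mat_lower_mul_diag_mul_upper (x y : ℤ_[p]) (u : ℤ_[p]ˣ × ℤ_[p]ˣ) :
    mat (lower x * diag u * upper y) =
      !![(u.1 : ℤ_[p]), u.1 * y; p * x * u.1, p * x * u.1 * y + u.2] := by
  simp

theorem exists_eq_lower_mul_diag_mul_upper {g : K0 p} {a b c d : ℤ_[p]}
    (h : mat g = !![1 + p * a, b; p * c, 1 + p * d]) :
    ∃ x y u, g = lower x * diag u * upper y ∧ toZMod x = toZMod c ∧ diag u ∈ I1 p := by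
  obtain ⟨α, hα⟩ : IsUnit (1 + (p : ℤ_[p]) * a) := isUnit_iff_toZMod_ne_zero.mpr (by simp)
  set β := ((α⁻¹ : ℤ_[p]ˣ) : ℤ_[p])
  have hαβ : (1 + p * a) * β = 1 := hα ▸ α.mul_inv
  have hβ : toZMod β = 1 := by
    simpa using congrArg toZMod hαβ
  obtain ⟨δ, hδ⟩ : IsUnit (1 + p * d - p * c * β * b) :=
    isUnit_iff_toZMod_ne_zero.mpr (by simp)
  refine ⟨c * β, β * b, (α, δ), mat_injective ?_, by simp [hβ],
    diag_mem_I1 (by simp [hα]) (by simp [hδ])⟩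
  rw [h, mat_lower_mul_diag_mul_upper]
  ext i j
  fin_cases i <;> fin_cases j <;> simp [hα, hδ]
  · linear_combination -b * hαβ
  · linear_combination -(p * c : ℤ_[p]) * hαβ
  · linear_combination -(p * c * β * b : ℤ_[p]) * hαβ

def IsCongr (n : ℕ) (g : K0 p) : Prop :=
  ∀ i j, mat g i j - (1 : Matrix (Fin 2) (Fin 2) ℤ_[p]) i j ∈ Ideal.span {(p : ℤ_[p]) ^ n}

theorem isCongr_upper_pow (y : ℤ_[p]) (n : ℕ) : IsCongr n (upper y ^ p ^ n) := by
  rw [← AddChar.map_nsmul_eq_pow]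
  intro i j
  fin_cases i <;> fin_cases j <;> simp [Ideal.mem_span_singleton, nsmul_eq_mul]

theorem isCongr_lower_pow (x : ℤ_[p]) (n : ℕ) : IsCongr n (lower x ^ p ^ n) := by
  rw [← AddChar.map_nsmul_eq_pow]
  intro i j
  fin_cases i <;> fin_cases j <;> simp [Ideal.mem_span_singleton, nsmul_eq_mul]
  exact dvd_mul_of_dvd_right (dvd_mul_right _ _) _

theorem isCongr_diag_pow {u : ℤ_[p]ˣ × ℤ_[p]ˣ} (hu : diag u ∈ I1 p) (n : ℕ) :
    IsCongr n (diag u ^ p ^ n) := by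
  simp only [mem_I1_iff, mat_diag] at hu
  simp only [Matrix.of_apply, Matrix.cons_val', Matrix.cons_val_zero, Matrix.cons_val_one,
    Matrix.empty_val', Matrix.cons_val_fin_one] at hu
  have h₁ := (pow_dvd_pow (p : ℤ_[p]) n.le_succ).trans (pow_succ_dvd_pow_sub_one hu.1 n)
  have h₂ := (pow_dvd_pow (p : ℤ_[p]) n.le_succ).trans (pow_succ_dvd_pow_sub_one hu.2 n)
  rw [← map_pow diag u]
  intro i j
  fin_cases i <;> fin_cases j <;> simp [-map_pow, Ideal.mem_span_singleton, h₁, h₂]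

theorem aVal_eq (k : Type) [Field k] [CharP k p] (g : K0 p) :
    aVal p k g = ZMod.castHom (dvd_refl p) k ((diagRed g).1 * (diagRed g).2⁻¹) := rfl

theorem aVal_eq_one_of_mem_I1 {k : Type} [Field k] [CharP k p] {g : K0 p} (hg : g ∈ I1 p) :
    aVal p k g = 1 := by
  rw [aVal_eq, (MonoidHom.mem_ker).mp hg]
  simp

theorem aVal_diag (k : Type) [Field k] [CharP k p] (u : ℤ_[p]ˣ × ℤ_[p]ˣ) :
    aVal p k (diag u) =
      ZMod.castHom (dvd_refl p) k (toZMod (u.1 * ((u.2⁻¹ : ℤ_[p]ˣ) : ℤ_[p]))) := by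
  rw [map_mul, toZMod_units_inv]
  rfl

theorem exists_aVal_diag_sq_ne_one (k : Type) [Field k] [CharP k p] (hp : 5 ≤ p) :
    ∃ w, aVal p k (diag w) ^ 2 ≠ 1 := by
  have hk (R : Type) [AddGroupWithOne R] [CharP R p] (n : ℕ) (h0 : 0 < n) (hn : n < p) :
      (n : R) ≠ 0 := fun h =>
    absurd (Nat.le_of_dvd h0 ((CharP.cast_eq_zero_iff R p n).mp h)) (by omega)
  have h2 : toZMod (2 : ℤ_[p]) = 2 := map_ofNat _ 2
  obtain ⟨u, hu⟩ : IsUnit (2 : ℤ_[p]) := isUnit_iff_toZMod_ne_zero.mpr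
    (by rw [h2]; exact_mod_cast hk (ZMod p) 2 (by norm_num) (by omega))
  refine ⟨(u, 1), fun h4 => hk k 3 (by norm_num) (by omega) ?_⟩
  rw [aVal_diag] at h4
  simp only [hu, inv_one, Units.val_one, mul_one, h2, map_ofNat] at h4
  push_cast
  linear_combination h4

section Twist

variable {k : Type} [Field k] [CharP k p] {χ ψ : K0 p →* kˣ}

theorem eq_one_of_mem_I1_of_eq_mul_aVal (hχ : ∀ g ∈ I1 p, χ g = 1)
    (hψ : ∀ g, (ψ g : k) = χ g * aVal p k g) {g : K0 p} (hg : g ∈ I1 p) : ψ g = 1 := by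
  ext
  rw [hψ, hχ g hg, aVal_eq_one_of_mem_I1 hg, Units.val_one, mul_one]

theorem sub_ne_zero_of_aVal_ne_one (hψ : ∀ g, (ψ g : k) = χ g * aVal p k g) {t : K0 p}
    (ht : aVal p k t ≠ 1) : (ψ t : k) - χ t ≠ 0 := by
  rw [hψ, ← mul_sub_one]
  exact mul_ne_zero (Units.ne_zero _) (sub_ne_zero.mpr ht)

end Twist

end K0

theorem IsSmoothChar.eq_one_of_forall_isCongr {p : ℕ} [Fact p.Prime] {k : Type} [Field k]
    [CharP k p] {χ : K0 p →* kˣ} (hχ : IsSmoothChar p k χ) {g : K0 p}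
    (hg : ∀ n, K0.IsCongr n (g ^ p ^ n)) : χ g = 1 := by
  obtain ⟨n, -, hn⟩ := hχ
  have h := congrArg Units.val (hn _ (hg n))
  rw [map_pow, Units.val_pow_eq_pow_val, Units.val_one, ← one_pow (p ^ n)] at h
  exact Units.ext (iterateFrobenius_inj k p n h)

theorem IsSmoothChar.eq_one_of_mem_I1 {p : ℕ} [Fact p.Prime] {k : Type} [Field k] [CharP k p]
    {χ : K0 p →* kˣ} (hχ : IsSmoothChar p k χ) {g : K0 p} (hg : g ∈ K0.I1 p) : χ g = 1 := by
  obtain ⟨a, b, c, d, h⟩ := K0.exists_mat_eq_of_mem_I1 hg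
  obtain ⟨x, y, u, rfl, -, hu⟩ := K0.exists_eq_lower_mul_diag_mul_upper h
  rw [map_mul, map_mul, hχ.eq_one_of_forall_isCongr (K0.isCongr_lower_pow x),
    hχ.eq_one_of_forall_isCongr (K0.isCongr_diag_pow hu),
    hχ.eq_one_of_forall_isCongr (K0.isCongr_upper_pow y), one_mul, one_mul]

namespace IsCocycle

open PadicInt K0

variable {p : ℕ} [Fact p.Prime] {k : Type} [Field k] [CharP k p] {χ ψ : K0 p →* kˣ}
  {f : K0 p → k}

theorem map_addChar_eq (hf : IsCocycle χ ψ f) (hχ : ∀ g ∈ I1 p, χ g = 1)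
    (hψ : ∀ g, (ψ g : k) = χ g * aVal p k g) (e : AddChar ℤ_[p] (K0 p)) (he : ∀ x, e x ∈ I1 p)
    (x : ℤ_[p]) : f (e x) = ZMod.castHom (dvd_refl p) k (toZMod x) * f (e 1) :=
  addMonoidHom_apply_eq_toZMod_mul (AddMonoidHom.mk' (fun x => f (e x)) fun x y => by
    rw [AddChar.map_add_eq_mul,
      hf.map_mul_of_trivial (hχ _ (he x)) (eq_one_of_mem_I1_of_eq_mul_aVal hχ hψ (he y))]) x

/-- For `t = diag w`, `f (t * upper 1 * t⁻¹)` is `𝔞 t * f (upper 1)` by additivity and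
`(𝔞 t)⁻¹ * f (upper 1)` by the cocycle relation. -/
theorem map_upper_eq_zero (hf : IsCocycle χ ψ f) (hχ : ∀ g ∈ I1 p, χ g = 1)
    (hψ : ∀ g, (ψ g : k) = χ g * aVal p k g) {w : ℤ_[p]ˣ × ℤ_[p]ˣ}
    (hw : aVal p k (diag w) ^ 2 ≠ 1) (y : ℤ_[p]) : f (upper y) = 0 := by
  have h := hf.conj_mul (hχ _ (upper_mem_I1 1))
    (eq_one_of_mem_I1_of_eq_mul_aVal hχ hψ (upper_mem_I1 1)) (diag w)
  rw [diag_conj_upper, mul_one, hf.map_addChar_eq hχ hψ upper upper_mem_I1, ← aVal_diag, hψ]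
    at h
  have hβ : f (upper 1) = 0 := by
    have : (χ (diag w) : k) * (aVal p k (diag w) ^ 2 - 1) * f (upper 1) = 0 := by
      linear_combination h
    simpa [Units.ne_zero, sub_ne_zero.mpr hw] using this
  rw [hf.map_addChar_eq hχ hψ upper upper_mem_I1, hβ, mul_zero]

theorem map_diag_eq_zero (hf : IsCocycle χ ψ f) (hχ : ∀ g ∈ I1 p, χ g = 1)
    (hψ : ∀ g, (ψ g : k) = χ g * aVal p k g) {w : ℤ_[p]ˣ × ℤ_[p]ˣ}
    (hw : aVal p k (diag w) ≠ 1) {v : ℤ_[p]ˣ × ℤ_[p]ˣ} (hv : diag v ∈ I1 p) :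
    f (diag v) = 0 := by
  have h := hf.mul_sub_eq (congrArg f ((Commute.all w v).map diag).eq)
  rw [eq_one_of_mem_I1_of_eq_mul_aVal hχ hψ hv, hχ _ hv, sub_self, mul_zero] at h
  exact (mul_eq_zero.mp h).resolve_right (sub_ne_zero_of_aVal_ne_one hψ hw)

theorem map_eq_of_mat_eq (hf : IsCocycle χ ψ f) (hχ : ∀ g ∈ I1 p, χ g = 1)
    (hψ : ∀ g, (ψ g : k) = χ g * aVal p k g) {w : ℤ_[p]ˣ × ℤ_[p]ˣ}
    (hw : aVal p k (diag w) ^ 2 ≠ 1) {g : K0 p} {a b c d : ℤ_[p]}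
    (h : mat g = !![1 + p * a, b; p * c, 1 + p * d]) :
    f g = ZMod.castHom (dvd_refl p) k (toZMod c) * f (lower 1) := by
  obtain ⟨x, y, u, rfl, hx, hu⟩ := exists_eq_lower_mul_diag_mul_upper h
  have hψ₁ {g : K0 p} (hg : g ∈ I1 p) : ψ g = 1 := eq_one_of_mem_I1_of_eq_mul_aVal hχ hψ hg
  rw [hf.map_mul_of_trivial (hχ _ (mul_mem (lower_mem_I1 x) hu)) (hψ₁ (upper_mem_I1 y)),
    hf.map_mul_of_trivial (hχ _ (lower_mem_I1 x)) (hψ₁ hu), hf.map_upper_eq_zero hχ hψ hw,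
    hf.map_diag_eq_zero hχ hψ (fun h1 => hw (by rw [h1, one_pow])) hu,
    hf.map_addChar_eq hχ hψ lower lower_mem_I1, hx, add_zero, add_zero]

theorem map_lower_one_ne_zero (hf : IsCocycle χ ψ f) (hχ : ∀ g ∈ I1 p, χ g = 1)
    (hψ : ∀ g, (ψ g : k) = χ g * aVal p k g) {w : ℤ_[p]ˣ × ℤ_[p]ˣ}
    (hw : aVal p k (diag w) ^ 2 ≠ 1) (hnc : ∀ u : k, ¬ ∀ g, f g = u * ((ψ g : k) - χ g)) :
    f (lower 1) ≠ 0 := by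
  intro h0
  have hw₁ : aVal p k (diag w) ≠ 1 := fun h => hw (by rw [h, one_pow])
  obtain ⟨u, hu⟩ := hf.exists_eq_mul_sub hχ
    (fun g hg => by
      obtain ⟨a, b, c, d, h⟩ := exists_mat_eq_of_mem_I1 hg
      rw [hf.map_eq_of_mat_eq hχ hψ hw h, h0, mul_zero])
    (commutator_mem_I1 _) (sub_ne_zero_of_aVal_ne_one hψ hw₁)
  exact hnc u hu

end IsCocycle

theorem nonsplit_extension_adapted_basis_general (p : ℕ) [Fact p.Prime] (hp5 : 5 ≤ p)
    (k : Type) [Field k] [CharP k p]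
    (χ ψ : K0 p →* kˣ)
    (hχs : IsSmoothChar p k χ)
    (hψ : ∀ g : K0 p, (ψ g : k) = (χ g : k) * aVal p k g)
    (ρ : Representation k (K0 p) (k × k))
    (hext : IsExt p k χ ψ ρ) (hns : IsNonsplit p k ψ ρ) :
    ∃ e₀ e₁ : k × k, LinearIndependent k ![e₀, e₁] ∧
      (∀ g : K0 p, ρ g e₀ = (χ g : k) • e₀) ∧
      (∀ g : K0 p, ∃ t : k, ρ g e₁ = ((χ g : k) * aVal p k g) • e₁ + t • e₀) ∧
      (∀ g : K0 p, ∀ a b c d : ℤ_[p],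
        ((g : GL (Fin 2) ℤ_[p]) : Matrix (Fin 2) (Fin 2) ℤ_[p]) =
          !![1 + (p : ℤ_[p]) * a, b; (p : ℤ_[p]) * c, 1 + (p : ℤ_[p]) * d] →
        ρ g e₁ = e₁ + (ZMod.castHom (dvd_refl p) k (PadicInt.toZMod c)) • e₀) := by
  obtain ⟨w, hw⟩ := K0.exists_aVal_diag_sq_ne_one k hp5
  have hf := hext.isCocycle
  have hχ : ∀ g ∈ K0.I1 p, χ g = 1 := fun _ => hχs.eq_one_of_mem_I1
  set γ := ρ.upperRight (K0.lower 1)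
  have hγ : γ ≠ 0 := hf.map_lower_one_ne_zero hχ hψ hw (hext.not_coboundary hns)
  refine ⟨(γ, 0), (0, 1), ?_, fun g => ?_, fun g => ⟨ρ.upperRight g / γ, ?_⟩,
    fun g a b c d h => ?_⟩
  · rw [LinearIndependent.pair_iff]
    intro s t hst
    simp_all
  · rw [hext.apply_eq]
    ext <;> simp
  · rw [hext.apply_eq, ← hψ]
    ext <;> simp [hγ]
  · rw [hext.apply_eq, hf.map_eq_of_mat_eq hχ hψ hw h,
      K0.eq_one_of_mem_I1_of_eq_mul_aVal hχ hψ (K0.mem_I1_of_mat_eq h)]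
    ext <;> simp [γ, mul_comm]

/-- Adapted basis for a nonsplit extension: if `ρ` is a nonsplit smooth extension of `χ𝔞` by
`χ` (as representations of `K₀(p)` trivial on `Z₁`), then there is a basis `(e₀, e₁)` of the
underlying two-dimensional space such that `K₀(p)` acts on `e_i` through `χ𝔞^i` and
`(1+pa b; pc 1+pd)·e₁ = e₁ + c̄·e₀`. -/
theorem nonsplit_extension_adapted_basis (p : ℕ) [Fact p.Prime] (hp5 : 5 ≤ p)
    (k : Type) [Field k] [IsAlgClosed k] [CharP k p]
    (χ ψ : K0 p →* kˣ)
    (hχs : IsSmoothChar p k χ)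
    (hχZ : ∀ g : K0 p, IsZ1 p (g : GL (Fin 2) ℤ_[p]) → χ g = 1)
    (hψ : ∀ g : K0 p, (ψ g : k) = (χ g : k) * aVal p k g)
    (ρ : Representation k (K0 p) (k × k))
    (hext : IsExt p k χ ψ ρ) (hsm : IsSmoothRep p k ρ)
    (hZ1 : IsZ1TrivialRep p k ρ) (hns : IsNonsplit p k ψ ρ) :
    ∃ e₀ e₁ : k × k, LinearIndependent k ![e₀, e₁] ∧
      (∀ g : K0 p, ρ g e₀ = (χ g : k) • e₀) ∧
      (∀ g : K0 p, ∃ t : k, ρ g e₁ = ((χ g : k) * aVal p k g) • e₁ + t • e₀) ∧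
      (∀ g : K0 p, ∀ a b c d : ℤ_[p],
        ((g : GL (Fin 2) ℤ_[p]) : Matrix (Fin 2) (Fin 2) ℤ_[p]) =
          !![1 + (p : ℤ_[p]) * a, b; (p : ℤ_[p]) * c, 1 + (p : ℤ_[p]) * d] →
        ρ g e₁ = e₁ + (ZMod.castHom (dvd_refl p) k (PadicInt.toZMod c)) • e₀) :=
  nonsplit_extension_adapted_basis_general p hp5 k χ ψ hχs hψ ρ hext hns
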